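/- Let k be a field of characteristic ≠ 2 and O = k[[T₁,T₂]] with maximal ideal m. Let β : ℕ → ℕ be any function with the Artin approximation property for P(X,Y,Z) = X² − ZY²: for all i ∈ ℕ and (x,y,z) ∈ O³, if P(x,y,z) ∈ m^{β(i)+1} then there exists (x̄,ȳ,z̄) ∈ O³ with P(x̄,ȳ,z̄) = 0 and x−x̄, y−ȳ, z−z̄ ∈ m^{i+1}. Then β(i) ≥ i²/4 − 5 for all i ≥ 1. In particular β is not bounded above by any affine function of i. -/

import Mathlib

/-!
Put `c = 2n + 3`, `u = T₂ ^ c` and `v = T₁ ^ 2`. Truncating the binomial series of `√(1 + t)`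
after degree `n + 1` and homogenizing gives `A(u, v)` with
`A² = v ^ (2n+2) + u v ^ (2n+1) + u ^ (n+2) B(u, v)`, `B` homogeneous of degree `n`. Hence
`x = T₁ A`, `y = T₁ ^ (2n+2)`, `z = T₁ ^ 2 + T₂ ^ c` solve `x² = z y²` up to the error
`T₁ ^ 2 u ^ (n+2) B ∈ 𝔪 ^ (2n² + 9n + 8)`.

No exact solution `(x', y', z')` has `y'`, `z'` within `𝔪 ^ (i+1)` of `y`, `z` once `c ≤ i`:
then `y' ≠ 0`, and for the weights `(c, 1)` on `(T₁, T₂)` the weighted order of `z'` is that of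
`z`, namely `c`, which is odd, while `x'² = z' y'²` makes it even. So `β i ≥ 2n² + 9n + 8`
whenever `2n + 3 ≤ i`.
-/

open IsLocalRing

namespace MvPowerSeries

variable {σ R : Type*}

theorem weightedOrder_X_pow [Semiring R] [Nontrivial R] (w : σ → ℕ) (s : σ) (m : ℕ) :
    (X s ^ m : MvPowerSeries σ R).weightedOrder w = (m * w s : ℕ) := by
  classical
  rw [X_pow_eq, weightedOrder_monomial, if_neg one_ne_zero, Finsupp.weight_single, smul_eq_mul]

theorem X_mem_maximalIdeal {k : Type*} [Field k] (s : σ) :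
    X s ∈ maximalIdeal (MvPowerSeries σ k) := by
  simp [mem_maximalIdeal, mem_nonunits_iff, isUnit_iff_constantCoeff]

theorem le_order_of_mem_maximalIdeal_pow {k : Type*} [Field k] {f : MvPowerSeries σ k} {n : ℕ}
    (hf : f ∈ maximalIdeal (MvPowerSeries σ k) ^ n) : n ≤ f.order := by
  induction n generalizing f with
  | zero => simp
  | succ n ih =>
    rw [pow_succ] at hf
    refine Submodule.mul_induction_on hf (fun a ha b hb => ?_) (fun a b ha hb => ?_)
    · have hb : 1 ≤ b.order := by
        rw [one_le_order_iff_constCoeff_eq_zero]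
        simpa [mem_maximalIdeal, mem_nonunits_iff, isUnit_iff_constantCoeff] using hb
      calc ((n + 1 : ℕ) : ℕ∞) = n + 1 := by push_cast; rfl
        _ ≤ a.order + b.order := add_le_add (ih ha) hb
        _ ≤ (a * b).order := le_order_mul
    · exact (le_min ha hb).trans min_order_le_add

theorem order_le_weightedOrder [Semiring R] {w : σ → ℕ} (hw : ∀ i, 1 ≤ w i)
    (f : MvPowerSeries σ R) : f.order ≤ f.weightedOrder w := by
  refine le_weightedOrder w fun d hd => coeff_of_lt_order (lt_of_le_of_lt ?_ hd)
  rw [Finsupp.degree_eq_weight_one, Finsupp.weight_apply, Finsupp.weight_apply]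
  exact_mod_cast Finsupp.sum_le_sum fun i _ => by simpa using Nat.le_mul_of_pos_right _ (hw i)

theorem weightedOrder_eq_of_sub_mem_maximalIdeal_pow {k : Type*} [Field k] {w : σ → ℕ}
    (hw : ∀ i, 1 ≤ w i) {f g : MvPowerSeries σ k} {c i : ℕ} (hf : f.weightedOrder w = c)
    (hci : c ≤ i) (hfg : f - g ∈ maximalIdeal (MvPowerSeries σ k) ^ (i + 1)) :
    g.weightedOrder w = c := by
  have hlt : f.weightedOrder w < (-(f - g)).weightedOrder w := by
    rw [weightedOrder_neg, hf]
    refine lt_of_lt_of_le ?_ ((le_order_of_mem_maximalIdeal_pow hfg).trans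
      (order_le_weightedOrder hw _))
    exact_mod_cast Nat.lt_succ_of_le hci
  rw [show g = f + -(f - g) by ring, weightedOrder_add_of_weightedOrder_ne w hlt.ne,
    min_eq_left hlt.le, hf]

theorem sq_ne_mul_sq_of_weightedOrder_odd [CommSemiring R] [NoZeroDivisors R]
    {w : σ → ℕ} {x y z : MvPowerSeries σ R} (hy : y ≠ 0) {c : ℕ} (hc : Odd c)
    (hz : z.weightedOrder w = c) : x ^ 2 ≠ z * y ^ 2 := by
  intro h
  have hv := congrArg (weightedOrder w) h
  rw [weightedOrder_mul, sq, sq, weightedOrder_mul, weightedOrder_mul, hz] at hv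
  obtain ⟨b, hb⟩ := ENat.ne_top_iff_exists.mp ((weightedOrder_eq_top_iff w).not.mpr hy)
  rw [← hb] at hv
  obtain ⟨a, ha⟩ : ∃ a : ℕ, (a : ℕ∞) = x.weightedOrder w := by
    refine ENat.ne_top_iff_exists.mp fun htop => ?_
    rw [htop] at hv
    exact ENat.natCast_ne_top (c + (b + b)) (by push_cast; exact hv.symm)
  rw [← ha] at hv
  have : a + a = c + (b + b) := by exact_mod_cast hv
  obtain ⟨r, rfl⟩ := hc
  omega

end MvPowerSeries

theorem MvPolynomial.aeval_mem_pow_of_isHomogeneous {σ R S : Type*} [CommSemiring R]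
    [CommSemiring S] [Algebra R S] {I : Ideal S} {g : σ → S} (hg : ∀ i, g i ∈ I)
    {p : MvPolynomial σ R} {d : ℕ} (hp : p.IsHomogeneous d) : aeval g p ∈ I ^ d := by
  have hmem : p ∈ idealOfVars σ R ^ d := by
    rw [mem_pow_idealOfVars_iff]
    intro x hx
    exact (hp (mem_support_iff.mp hx)).ge.trans_eq (by rw [Finsupp.degree_eq_weight_one]; rfl)
  have hvars : (idealOfVars σ R).map (aeval g) ≤ I := by
    rw [idealOfVars, Ideal.map_span, Ideal.span_le]
    rintro _ ⟨_, ⟨i, rfl⟩, rfl⟩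
    simpa using hg i
  have := Ideal.mem_map_of_mem (aeval g) hmem
  rw [Ideal.map_pow] at this
  exact Ideal.pow_right_mono hvars d this

theorem PowerSeries.exists_sq_eq_one_add_X {R : Type*} [CommRing R] (h2 : IsUnit (2 : R)) :
    ∃ s : PowerSeries R, s ^ 2 = 1 + X := by
  have h2' : IsUnit (2 : PowerSeries R) := map_ofNat (C (R := R)) 2 ▸ h2.map C
  obtain ⟨s, hs, -⟩ := HenselianRing.is_henselian (I := Ideal.span {(X : PowerSeries R)})
    (Polynomial.X ^ 2 - Polynomial.C (1 + X)) (by monicity!) 1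
    (by simp) (by simpa [one_add_one_eq_two] using h2'.map (Ideal.Quotient.mk _))
  exact ⟨s, by simpa [sub_eq_zero] using hs⟩

open Polynomial in
theorem Polynomial.exists_sq_eq_one_add_X_add_X_pow_mul {R : Type*} [CommRing R]
    (h2 : IsUnit (2 : R)) (n : ℕ) :
    ∃ S Q : R[X], S.natDegree ≤ n + 1 ∧ Q.natDegree ≤ n ∧
      S ^ 2 = 1 + X + X ^ (n + 2) * Q := by
  obtain ⟨s, hs⟩ := PowerSeries.exists_sq_eq_one_add_X h2
  have hS : (PowerSeries.trunc (n + 2) s).natDegree ≤ n + 1 :=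
    Nat.lt_succ_iff.mp (PowerSeries.natDegree_trunc_lt s (n + 1))
  obtain ⟨Q, hQ⟩ : X ^ (n + 2) ∣ PowerSeries.trunc (n + 2) s ^ 2 - (1 + X) := by
    refine X_pow_dvd_iff.mpr fun d hd => ?_
    rw [← coeff_coe, coe_sub, coe_pow, map_sub, sq,
      ← PowerSeries.coeff_mul_eq_coeff_trunc_mul_trunc _ _ hd, ← sq, hs]
    simp
  refine ⟨_, Q, hS, ?_, by linear_combination hQ⟩
  rcases eq_or_ne Q 0 with rfl | hQ0
  · simp
  have : Nontrivial R := nontrivial_iff.mp ⟨Q, 0, hQ0⟩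
  have := natDegree_sub_le_of_le (natDegree_pow_le_of_le 2 hS)
    (show natDegree (1 + X : R[X]) ≤ 1 by compute_degree!)
  rw [hQ, natDegree_X_pow_mul _ hQ0] at this
  omega

open MvPolynomial in
theorem MvPolynomial.exists_approx_sqrt_homogeneous {R : Type*} [CommRing R]
    (h2 : IsUnit (2 : R)) (n : ℕ) :
    ∃ A B : MvPolynomial (Fin 2) R, B.IsHomogeneous n ∧
      A ^ 2 = X 1 ^ (2 * n + 2) + X 0 * X 1 ^ (2 * n + 1) + X 0 ^ (n + 2) * B := by
  obtain ⟨S, Q, hS, hQ, hSQ⟩ := Polynomial.exists_sq_eq_one_add_X_add_X_pow_mul h2 n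
  refine ⟨S.homogenize (n + 1), Q.homogenize n, Polynomial.isHomogeneous_homogenize Q, ?_⟩
  rw [sq, ← Polynomial.homogenize_mul _ _ hS hS, ← sq, hSQ,
    show n + 1 + (n + 1) = n + 2 + n by ring, Polynomial.homogenize_add, Polynomial.homogenize_add,
    Polynomial.homogenize_mul _ _ (Polynomial.natDegree_X_pow_le _) hQ]
  simp only [Polynomial.homogenize_one, Polynomial.homogenize_X (by omega : n + 2 + n ≠ 0),
    Polynomial.homogenize_X_pow le_rfl]
  rw [Nat.sub_self, show n + 2 + n - 1 = 2 * n + 1 by omega]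
  ring

namespace ArtinApproximation

open MvPowerSeries

variable {k : Type*} [Field k]

local notation "𝕆" => MvPowerSeries (Fin 2) k
local notation "𝔪" => maximalIdeal (MvPowerSeries (Fin 2) k)

variable (k) in
def IsArtinFunction (β : ℕ → ℕ) : Prop :=
  ∀ (i : ℕ) (x y z : 𝕆), x ^ 2 - z * y ^ 2 ∈ 𝔪 ^ (β i + 1) →
    ∃ x' y' z' : 𝕆, x' ^ 2 - z' * y' ^ 2 = 0 ∧
      x - x' ∈ 𝔪 ^ (i + 1) ∧ y - y' ∈ 𝔪 ^ (i + 1) ∧ z - z' ∈ 𝔪 ^ (i + 1)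

theorem exists_sq_sub_mem_maximalIdeal_pow (h2 : (2 : k) ≠ 0) (n : ℕ) :
    ∃ x : 𝕆, x ^ 2 - (X 0 ^ 2 + X 1 ^ (2 * n + 3)) * (X 0 ^ (2 * n + 2)) ^ 2 ∈
      𝔪 ^ (2 + (2 * n + 3) * (n + 2) + 2 * n) := by
  obtain ⟨A, B, hB, hAB⟩ := MvPolynomial.exists_approx_sqrt_homogeneous h2.isUnit n
  set g : Fin 2 → 𝕆 := ![X 1 ^ (2 * n + 3), X 0 ^ 2]
  have hA : MvPolynomial.aeval g A ^ 2 = (X 0 ^ 2) ^ (2 * n + 2) +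
      X 1 ^ (2 * n + 3) * (X 0 ^ 2) ^ (2 * n + 1) +
      (X 1 ^ (2 * n + 3)) ^ (n + 2) * MvPolynomial.aeval g B := by
    rw [← map_pow, hAB]
    simp [g]
  refine ⟨X 0 * MvPolynomial.aeval g A, ?_⟩
  have hg : ∀ j, g j ∈ 𝔪 ^ 2 := by
    intro j
    fin_cases j
    · exact Ideal.pow_le_pow_right (by omega) (Ideal.pow_mem_pow (X_mem_maximalIdeal 1) _)
    · exact Ideal.pow_mem_pow (X_mem_maximalIdeal 0) _
  have herr : (X 0 * MvPolynomial.aeval g A) ^ 2 -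
      (X 0 ^ 2 + X 1 ^ (2 * n + 3)) * (X 0 ^ (2 * n + 2)) ^ 2 =
      X 0 ^ 2 * X 1 ^ ((2 * n + 3) * (n + 2)) * MvPolynomial.aeval g B := by
    rw [mul_pow, hA]
    ring
  have hB' : MvPolynomial.aeval g B ∈ 𝔪 ^ (2 * n) :=
    pow_mul 𝔪 2 n ▸ MvPolynomial.aeval_mem_pow_of_isHomogeneous hg hB
  rw [herr, pow_add, pow_add]
  exact Ideal.mul_mem_mul (Ideal.mul_mem_mul (Ideal.pow_mem_pow (X_mem_maximalIdeal 0) 2)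
    (Ideal.pow_mem_pow (X_mem_maximalIdeal 1) _)) hB'

theorem weightedOrder_X_zero_sq_add_X_one_pow {c : ℕ} (hc : 1 ≤ c) :
    (X 0 ^ 2 + X 1 ^ c : 𝕆).weightedOrder ![c, 1] = c := by
  have h0 : (X 0 ^ 2 : 𝕆).weightedOrder ![c, 1] = (2 * c : ℕ) := weightedOrder_X_pow _ 0 2
  have h1 : (X 1 ^ c : 𝕆).weightedOrder ![c, 1] = (c * 1 : ℕ) := weightedOrder_X_pow _ 1 c
  have hlt : (c * 1 : ℕ) < 2 * c := by omega
  rw [weightedOrder_add_of_weightedOrder_ne, h0, h1, min_eq_right (Nat.cast_le.mpr hlt.le),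
    mul_one]
  rw [h0, h1]
  exact_mod_cast hlt.ne'

theorem IsArtinFunction.quadratic_le_apply {β : ℕ → ℕ} (hβ : IsArtinFunction k β)
    (h2 : (2 : k) ≠ 0) (n : ℕ) {i : ℕ} (hi : 2 * n + 3 ≤ i) :
    2 + (2 * n + 3) * (n + 2) + 2 * n ≤ β i := by
  by_contra! hlt
  obtain ⟨x, hx⟩ := exists_sq_sub_mem_maximalIdeal_pow h2 n
  obtain ⟨x', y', z', hsol, -, hy, hz⟩ := hβ i _ _ _ (Ideal.pow_le_pow_right hlt hx)
  have hy' : y'.order = ↑(2 * n + 2) := by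
    refine weightedOrder_eq_of_sub_mem_maximalIdeal_pow (fun _ => le_rfl) ?_ (by omega) hy
    simpa using weightedOrder_X_pow (R := k) (fun _ => 1) 0 (2 * n + 2)
  have hz' : z'.weightedOrder ![2 * n + 3, 1] = ↑(2 * n + 3) := by
    refine weightedOrder_eq_of_sub_mem_maximalIdeal_pow (fun j => ?_) ?_ hi hz
    · fin_cases j <;> simp
    · exact weightedOrder_X_zero_sq_add_X_one_pow (by omega)
  refine sq_ne_mul_sq_of_weightedOrder_odd (fun h => ?_) ⟨n + 1, by ring⟩ hz'
    (sub_eq_zero.mp hsol)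
  rw [h, order_zero] at hy'
  exact ENat.natCast_ne_top _ hy'.symm

end ArtinApproximation

open ArtinApproximation in
/-- Any function `β` with the Artin approximation property for `P = X² − ZY²` over
`k[[T₁,T₂]]` (`char k ≠ 2`) satisfies `β(i) ≥ i²/4 − 5` for `i ≥ 1`; in particular `β`
is not bounded above by any affine function. -/
theorem artin_function_not_affine
    {k : Type*} [Field k] (hk : ringChar k ≠ 2) (β : ℕ → ℕ)
    (hβ : ∀ (i : ℕ) (x y z : MvPowerSeries (Fin 2) k),
      x ^ 2 - z * y ^ 2 ∈
          (IsLocalRing.maximalIdeal (MvPowerSeries (Fin 2) k)) ^ (β i + 1) →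
      ∃ x' y' z' : MvPowerSeries (Fin 2) k, x' ^ 2 - z' * y' ^ 2 = 0 ∧
        x - x' ∈ (IsLocalRing.maximalIdeal (MvPowerSeries (Fin 2) k)) ^ (i + 1) ∧
        y - y' ∈ (IsLocalRing.maximalIdeal (MvPowerSeries (Fin 2) k)) ^ (i + 1) ∧
        z - z' ∈ (IsLocalRing.maximalIdeal (MvPowerSeries (Fin 2) k)) ^ (i + 1)) :
    (∀ i : ℕ, 1 ≤ i → (i : ℚ) ^ 2 / 4 - 5 ≤ (β i : ℚ)) ∧
    ¬ ∃ a b : ℕ, ∀ i : ℕ, β i ≤ a * i + b := by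
  have hβ' : IsArtinFunction k β := hβ
  have h2 : (2 : k) ≠ 0 := Ring.two_ne_zero hk
  refine ⟨fun i _ => ?_, fun ⟨a, b, hab⟩ => ?_⟩
  · rcases le_or_gt i 4 with hi | hi
    · have : (i : ℚ) ≤ 4 := by exact_mod_cast hi
      nlinarith [(β i).cast_nonneg (α := ℚ), i.cast_nonneg (α := ℚ)]
    · obtain ⟨n, hni, hin⟩ : ∃ n, 2 * n + 3 ≤ i ∧ i ≤ 2 * n + 4 :=
        ⟨(i - 3) / 2, by omega, by omega⟩
      have hle : ((2 + (2 * n + 3) * (n + 2) + 2 * n : ℕ) : ℚ) ≤ β i :=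
        by exact_mod_cast hβ'.quadratic_le_apply h2 n hni
      have hin' : (i : ℚ) ≤ 2 * n + 4 := by exact_mod_cast hin
      push_cast at hle
      nlinarith [i.cast_nonneg (α := ℚ)]
  · have hle := hβ'.quadratic_le_apply h2 (a + b) le_rfl
    nlinarith [hab (2 * (a + b) + 3)]
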